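/- arXiv:1412.2976 — 10 statements merged into one kernel-verified Lean document; each statement's English description precedes it below -/
import Mathlib

section
/- Let R be a *-semigroup and a₁, a₂, d ∈ S such that a₁ and a₂ have Moore-Penrose inverses a₁† and a₂†. If d·a₁ = a₂·d and d·a₁* = a₂*·d, then a₂†·d = d·a₁†. -/
/-- `b` is a Moore-Penrose inverse of `a` in a *-semigroup. -/
def IsMPsemigroup {S : Type*} [Semigroup S] [StarMul S] (a b : S) : Prop :=
  a * b * a = a ∧ b * a * b = b ∧ star (a * b) = a * b ∧ star (b * a) = b * a

/-!
Both `a₂† d` and `d a₁†` equal `a₂† a₂ d a₁†`. To see this, expand with the identities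
`a* = a* a a† = a† a a*` and `a† = a† a†* a* = a* a†* a†`, which hold for any Moore-Penrose
inverse, and move `a₁` and `a₁*` across `d` using the intertwining relations.
-/

namespace IsMPsemigroup

variable {S : Type*} [Semigroup S] [StarMul S] {a b : S}

theorem star_eq_star_mul_mul (h : IsMPsemigroup a b) : star a = star a * a * b := by
  conv_lhs => rw [← h.1, star_mul, h.2.2.1, ← mul_assoc]

theorem star_eq_mul_mul_star (h : IsMPsemigroup a b) : star a = b * a * star a := by
  conv_lhs => rw [← h.1, mul_assoc, star_mul, h.2.2.2]

theorem eq_mul_star_mul_star (h : IsMPsemigroup a b) : b = b * star b * star a := by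
  conv_lhs => rw [← h.2.1, mul_assoc, ← h.2.2.1, star_mul, ← mul_assoc]

theorem eq_star_mul_star_mul (h : IsMPsemigroup a b) : b = star a * star b * b := by
  conv_lhs => rw [← h.2.1, ← h.2.2.2, star_mul]

variable {a₁ a₂ d b₁ b₂ : S}

theorem inv_mul_intertwiner (h₁ : IsMPsemigroup a₁ b₁) (h₂ : IsMPsemigroup a₂ b₂)
    (hd : d * a₁ = a₂ * d) (hd' : d * star a₁ = star a₂ * d) :
    b₂ * d = b₂ * a₂ * d * b₁ :=
  calc b₂ * d = b₂ * star b₂ * (star a₂ * d) := by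
        conv_lhs => rw [h₂.eq_mul_star_mul_star]
        simp only [mul_assoc]
    _ = b₂ * star b₂ * (d * (star a₁ * a₁ * b₁)) := by rw [← h₁.star_eq_star_mul_mul, hd']
    _ = b₂ * star b₂ * star a₂ * (d * a₁) * b₁ := by simp only [← mul_assoc, hd']
    _ = b₂ * a₂ * d * b₁ := by rw [hd, ← h₂.eq_mul_star_mul_star]; simp only [mul_assoc]

theorem intertwiner_mul_inv (h₁ : IsMPsemigroup a₁ b₁) (h₂ : IsMPsemigroup a₂ b₂)
    (hd' : d * star a₁ = star a₂ * d) :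
    d * b₁ = b₂ * a₂ * d * b₁ :=
  calc d * b₁ = star a₂ * d * (star b₁ * b₁) := by
        conv_lhs => rw [h₁.eq_star_mul_star_mul]
        simp only [← mul_assoc, hd']
    _ = b₂ * a₂ * star a₂ * d * (star b₁ * b₁) := by rw [← h₂.star_eq_mul_mul_star]
    _ = b₂ * a₂ * d * (star a₁ * star b₁ * b₁) := by
        rw [mul_assoc (b₂ * a₂), ← hd']; simp only [mul_assoc]
    _ = b₂ * a₂ * d * b₁ := by rw [← h₁.eq_star_mul_star_mul]

end IsMPsemigroup

theorem stmt0 {S : Type*} [Semigroup S] [StarMul S]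
    (a₁ a₂ d b₁ b₂ : S)
    (h₁ : IsMPsemigroup a₁ b₁) (h₂ : IsMPsemigroup a₂ b₂)
    (hd : d * a₁ = a₂ * d) (hd' : d * star a₁ = star a₂ * d) :
    b₂ * d = d * b₁ := by
  rw [h₁.inv_mul_intertwiner h₂ hd hd', h₁.intertwiner_mul_inv h₂ hd']
end

section
/- Let R be a ring with involution and a, b ∈ R be Moore-Penrose invertible with ab = ba and a*b = ba*. Then ab is Moore-Penrose invertible and (ab)† = b†a† = a†b†. -/
/-- `b` is a Moore-Penrose inverse of `a`. -/
def IsMP {R : Type*} [Ring R] [StarRing R] (a b : R) : Prop :=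
  a * b * a = a ∧ b * a * b = b ∧ star (a * b) = a * b ∧ star (b * a) = b * a

/-- `p` is a projector: `p² = p = p*`. -/
def IsProjector {R : Type*} [Ring R] [StarRing R] (p : R) : Prop :=
  p * p = p ∧ star p = p

/-- `a` is *-cancellable. -/
def StarCancellable {R : Type*} [Ring R] [StarRing R] (a : R) : Prop :=
  (∀ x : R, star a * a * x = 0 → a * x = 0) ∧ (∀ x : R, x * (a * star a) = 0 → x * a = 0)

/-! If `x` commutes with `a` and `a*`, then `a† x` and `x a†` both reduce to `a† a x a†`, using
`a† = a† a†* a* = a* a†* a†`; so `a†` commutes with `x`. Applied to `a` with `x = b, b*` and to `b` with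
`x = a, a†`, this makes `a, a†, b, b†` pairwise commute, and the Penrose equations for `ab` and `a† b†`
split into those for `a` and for `b`. -/

namespace IsMP

variable {R : Type*} [Ring R] [StarRing R] {a a' : R}

theorem mul_star_mul_star (h : IsMP a a') : a' * star a' * star a = a' := by
  rw [mul_assoc, ← star_mul, h.2.2.1, ← mul_assoc, h.2.1]

theorem star_mul_star_mul (h : IsMP a a') : star a * star a' * a' = a' := by
  rw [← star_mul, h.2.2.2, h.2.1]

theorem star_mul_mul (h : IsMP a a') : star a * a * a' = star a := by
  rw [mul_assoc, ← h.2.2.1, ← star_mul, h.1]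

theorem mul_mul_star (h : IsMP a a') : a' * a * star a = star a := by
  rw [← h.2.2.2, ← star_mul, ← mul_assoc, h.1]

theorem commute_of_commute (h : IsMP a a') {x : R} (hx : Commute a x)
    (hx' : Commute (star a) x) : Commute a' x := by
  have hxa : Commute (star a * a) x := hx'.mul_left hx
  have left : a' * x = a' * a * x * a' :=
    calc a' * x = a' * star a' * (star a * x) := by rw [← mul_assoc, h.mul_star_mul_star]
      _ = a' * star a' * (x * (star a * a * a')) := by rw [hx'.eq, h.star_mul_mul]
      _ = a' * star a' * star a * a * x * a' := by
        rw [← mul_assoc x, ← hxa.eq]; simp only [mul_assoc]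
      _ = a' * a * x * a' := by rw [h.mul_star_mul_star]
  have right : x * a' = a' * a * x * a' :=
    calc x * a' = x * star a * (star a' * a') := by
          rw [mul_assoc, ← mul_assoc (star a), h.star_mul_star_mul]
      _ = (a' * a * star a) * x * (star a' * a') := by rw [← hx'.eq, h.mul_mul_star]
      _ = a' * a * x * (star a * star a' * a') := by
        rw [mul_assoc (a' * a), hx'.eq]; simp only [mul_assoc]
      _ = a' * a * x * a' := by rw [h.star_mul_star_mul]
  exact left.trans right.symm

theorem mul_of_commute {b b' : R} (ha : IsMP a a') (hb : IsMP b b') (hab : Commute a b)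
    (hab' : Commute a b') (ha'b : Commute a' b) (ha'b' : Commute a' b') :
    IsMP (a * b) (a' * b') := by
  have hP : a * b * (a' * b') = a * a' * (b * b') := ha'b.symm.mul_mul_mul_comm a b'
  have hQ : a' * b' * (a * b) = a' * a * (b' * b) := hab'.symm.mul_mul_mul_comm a' b
  have hPQ : Commute (a * a') (b * b') :=
    (hab.mul_right hab').mul_left (ha'b.mul_right ha'b')
  have hQP : Commute (a' * a) (b' * b) :=
    (ha'b'.mul_right ha'b).mul_left (hab'.mul_right hab)
  refine ⟨?_, ?_, ?_, ?_⟩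
  · rw [hP, ((hab.mul_right hab').symm.mul_mul_mul_comm (a * a') b), ha.1, hb.1]
  · rw [hQ, ((ha'b'.mul_right ha'b).symm.mul_mul_mul_comm (a' * a) b'), ha.2.1, hb.2.1]
  · rw [hP, star_mul, ha.2.2.1, hb.2.2.1, hPQ.eq]
  · rw [hQ, star_mul, ha.2.2.2, hb.2.2.2, hQP.eq]

end IsMP

theorem stmt1 {R : Type*} [Ring R] [StarRing R] (a b a' b' : R)
    (ha : IsMP a a') (hb : IsMP b b')
    (hcomm : a * b = b * a) (hscomm : star a * b = b * star a) :
    IsMP (a * b) (b' * a') ∧ b' * a' = a' * b' := by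
  have hab : Commute a b := hcomm
  have has_b : Commute (star a) b := hscomm
  have ha_sb : Commute a (star b) := commute_star_comm.mp has_b
  have has_sb : Commute (star a) (star b) := commute_star_star.mpr hab
  have ha'b : Commute a' b := ha.commute_of_commute hab has_b
  have ha'_sb : Commute a' (star b) := ha.commute_of_commute ha_sb has_sb
  have hab' : Commute a b' := (hb.commute_of_commute hab.symm ha_sb.symm).symm
  have ha'b' : Commute a' b' := (hb.commute_of_commute ha'b.symm ha'_sb.symm).symm
  rw [← ha'b'.eq]
  exact ⟨ha.mul_of_commute hb hab hab' ha'b ha'b', rfl⟩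
end

section
/- Let R be a ring with involution and a, b ∈ R Moore-Penrose invertible with a*b = 0 and ab* = 0. Then a + b is Moore-Penrose invertible and (a+b)† = a† + b†. -/
/- The hypotheses make `a` and `b` orthogonal in the strong sense that each of `a, a†` annihilates
each of `b, b†` on either side; then the cross terms in `(a + b)(a† + b†)` and `(a† + b†)(a + b)` vanish,
and the four Penrose equations for `a + b` split into those for `a` and for `b`. -/

namespace IsMP

variable {R : Type*} [Ring R] [StarRing R] {a a' : R}

theorem star_mul_star_eq_mul (ha : IsMP a a') : star a' * star a = a * a' := by
  rw [← star_mul, ha.2.2.1]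

theorem star_mul_star_eq_mul' (ha : IsMP a a') : star a * star a' = a' * a := by
  rw [← star_mul, ha.2.2.2]

theorem mul_eq_zero_of_star_mul_eq_zero (ha : IsMP a a') {b : R} (h : star a * b = 0) :
    a' * b = 0 := by
  calc a' * b = a' * (a * a') * b := by rw [← mul_assoc, ha.2.1]
    _ = a' * star a' * (star a * b) := by rw [← ha.star_mul_star_eq_mul]; noncomm_ring
    _ = 0 := by rw [h, mul_zero]

theorem mul_eq_zero_of_mul_star_eq_zero (ha : IsMP a a') {b : R} (h : b * star a = 0) :
    b * a' = 0 := by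
  calc b * a' = b * (a' * a) * a' := by rw [mul_assoc, ha.2.1]
    _ = b * star a * (star a' * a') := by rw [← ha.star_mul_star_eq_mul']; noncomm_ring
    _ = 0 := by rw [h, zero_mul]

theorem add {b b' : R} (ha : IsMP a a') (hb : IsMP b b')
    (h₁ : a' * b = 0) (h₂ : b' * a = 0) (h₃ : a * b' = 0) (h₄ : b * a' = 0) :
    IsMP (a + b) (a' + b') := by
  obtain ⟨ha₁, ha₂, ha₃, ha₄⟩ := ha
  obtain ⟨hb₁, hb₂, hb₃, hb₄⟩ := hb
  have hl : (a + b) * (a' + b') = a * a' + b * b' := by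
    rw [add_mul, mul_add, mul_add, h₃, h₄]; abel
  have hr : (a' + b') * (a + b) = a' * a + b' * b := by
    rw [add_mul, mul_add, mul_add, h₁, h₂]; abel
  refine ⟨?_, ?_, ?_, ?_⟩
  · calc (a + b) * (a' + b') * (a + b)
        = a * a' * a + a * (a' * b) + (b * (b' * a) + b * b' * b) := by rw [hl]; noncomm_ring
      _ = a + b := by simp only [h₁, h₂, ha₁, hb₁, mul_zero, add_zero, zero_add]
  · calc (a' + b') * (a + b) * (a' + b')
        = a' * a * a' + a' * (a * b') + (b' * (b * a') + b' * b * b') := by rw [hr]; noncomm_ring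
      _ = a' + b' := by simp only [h₃, h₄, ha₂, hb₂, mul_zero, add_zero, zero_add]
  · rw [hl, star_add, ha₃, hb₃]
  · rw [hr, star_add, ha₄, hb₄]

end IsMP

theorem stmt2 {R : Type*} [Ring R] [StarRing R] (a b a' b' : R)
    (ha : IsMP a a') (hb : IsMP b b')
    (h1 : star a * b = 0) (h2 : a * star b = 0) :
    IsMP (a + b) (a' + b') := by
  have h1' : star b * a = 0 := by simpa using congrArg star h1
  have h2' : b * star a = 0 := by simpa using congrArg star h2
  exact ha.add hb (ha.mul_eq_zero_of_star_mul_eq_zero h1) (hb.mul_eq_zero_of_star_mul_eq_zero h1')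
    (hb.mul_eq_zero_of_mul_star_eq_zero h2) (ha.mul_eq_zero_of_mul_star_eq_zero h2')
end

section
/- Let R be a *-ring and p, q projectors in R such that p(1-q) and q(1-p) are *-cancellable. Then 1 - pqp is Moore-Penrose invertible if and only if p - pqp is Moore-Penrose invertible. -/
/-!
Since `p * q * p` lies in the corner `p R p`, we have
`1 - p * q * p = (p - p * q * p) + (1 - p)` with the first summand in `p R p` and the second the
complementary projector. Moore-Penrose inverses of orthogonal sums are sums of Moore-Penrose
inverses, and conversely the Moore-Penrose inverse of `a + (1 - p)` compresses to one of `a`,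
because its range and source projections commute with `p`.
-/

section

variable {R : Type*} [Ring R] [StarRing R]

lemma IsProjector.one_sub {p : R} (hp : IsProjector p) : IsProjector (1 - p) := by
  refine ⟨?_, by rw [star_sub, star_one, hp.2]⟩
  calc (1 - p) * (1 - p) = 1 - p - p + p * p := by noncomm_ring
    _ = 1 - p := by rw [hp.1]; abel

lemma IsProjector.isMP_self {p : R} (hp : IsProjector p) : IsMP p p := by
  refine ⟨?_, ?_, ?_, ?_⟩ <;> simp only [hp.1, hp.2]

lemma isMP_mul_mul_of_isSelfAdjoint {a y : R} (h : a * y * a = a)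
    (hay : IsSelfAdjoint (a * y)) (hya : IsSelfAdjoint (y * a)) : IsMP a (y * a * y) := by
  have hax : a * (y * a * y) = a * y := by rw [← mul_assoc, ← mul_assoc, h]
  have hxa : y * a * y * a = y * a := by
    calc y * a * y * a = y * (a * y * a) := by noncomm_ring
      _ = y * a := by rw [h]
  refine ⟨by rw [hax, h], ?_, by rw [hax]; exact hay, by rw [hxa]; exact hya⟩
  calc y * a * y * a * (y * a * y) = y * (a * y * a) * y := by rw [hxa]; noncomm_ring
    _ = y * a * y := by rw [h]

lemma IsMP.add_of_mul_eq_zero {a x c z : R} (ha : IsMP a x) (hc : IsMP c z)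
    (haz : a * z = 0) (hza : z * a = 0) (hcx : c * x = 0) (hxc : x * c = 0) :
    IsMP (a + c) (x + z) := by
  have hl : (a + c) * (x + z) = a * x + c * z := by
    rw [add_mul, mul_add, mul_add, haz, hcx, add_zero, zero_add]
  have hr : (x + z) * (a + c) = x * a + z * c := by
    rw [add_mul, mul_add, mul_add, hxc, hza, add_zero, zero_add]
  refine ⟨?_, ?_, ?_, ?_⟩
  · rw [hl, add_mul, mul_add, mul_add, ha.1, hc.1, mul_assoc a x c, hxc, mul_assoc c z a, hza]
    simp only [mul_zero, add_zero, zero_add]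
  · rw [hr, add_mul, mul_add, mul_add, ha.2.1, hc.2.1, mul_assoc x a z, haz, mul_assoc z c x, hcx]
    simp only [mul_zero, add_zero, zero_add]
  · rw [hl, star_add, ha.2.2.1, hc.2.2.1]
  · rw [hr, star_add, ha.2.2.2, hc.2.2.2]

lemma IsMP.mul_eq_self_of_mul_eq {a x p : R} (h : IsMP a x) (hp : IsProjector p)
    (hpa : p * a = a) : x * p = x := by
  have hax : a * x * p = a * x := by
    rw [← h.2.2.1, ← hp.2, ← star_mul, ← mul_assoc, hpa]
  calc x * p = x * (a * x * p) := by rw [← mul_assoc, ← mul_assoc, h.2.1]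
    _ = x := by rw [hax, ← mul_assoc, h.2.1]

lemma IsMP.mul_eq_self_of_mul_eq' {a x p : R} (h : IsMP a x) (hp : IsProjector p)
    (hap : a * p = a) : p * x = x := by
  have hxa : p * (x * a) = x * a := by
    rw [← h.2.2.2, ← hp.2, ← star_mul, mul_assoc, hap]
  calc p * x = p * (x * a) * x := by rw [mul_assoc, h.2.1]
    _ = x := by rw [hxa, h.2.1]

lemma IsMP.commute_mul_of_mul_eq {b y e : R} (h : IsMP b y) (he : IsSelfAdjoint e)
    (hbe : b * e = e) : Commute e (b * y) := by
  have hr : b * y * e = e := by rw [← hbe, ← mul_assoc, h.1]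
  have hl : e * (b * y) = e := by
    rw [← he.star_eq, ← h.2.2.1, ← star_mul, hr, he.star_eq]
  exact hl.trans hr.symm

lemma IsMP.commute_mul_of_mul_eq' {b y e : R} (h : IsMP b y) (he : IsSelfAdjoint e)
    (heb : e * b = e) : Commute e (y * b) := by
  have hl : e * (y * b) = e := by rw [← heb, mul_assoc, ← mul_assoc b, h.1]
  have hr : y * b * e = e := by
    rw [← he.star_eq, ← h.2.2.2, ← star_mul, hl, he.star_eq]
  exact hl.trans hr.symm

section Corner

variable {p a : R}

lemma IsMP.add_one_sub {x : R} (h : IsMP a x) (hp : IsProjector p) (hpa : p * a = a)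
    (hap : a * p = a) : IsMP (a + (1 - p)) (x + (1 - p)) := by
  have hxp : x * p = x := h.mul_eq_self_of_mul_eq hp hpa
  have hpx : p * x = x := h.mul_eq_self_of_mul_eq' hp hap
  refine h.add_of_mul_eq_zero hp.one_sub.isMP_self ?_ ?_ ?_ ?_
  · rw [mul_sub, mul_one, hap, sub_self]
  · rw [sub_mul, one_mul, hpa, sub_self]
  · rw [sub_mul, one_mul, hpx, sub_self]
  · rw [mul_sub, mul_one, hxp, sub_self]

lemma IsMP.exists_of_add_one_sub {y : R} (h : IsMP (a + (1 - p)) y) (hp : IsProjector p)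
    (hpa : p * a = a) (hap : a * p = a) : ∃ x, IsMP a x := by
  generalize hb : a + (1 - p) = b at h
  have hpb : p * b = a := by rw [← hb, mul_add, mul_sub, mul_one, hpa, hp.1, sub_self, add_zero]
  have hbp : b * p = a := by rw [← hb, add_mul, sub_mul, one_mul, hap, hp.1, sub_self, add_zero]
  have hbq : b * (1 - p) = 1 - p := by rw [mul_sub, mul_one, hbp, ← hb, add_sub_cancel_left]
  have hqb : (1 - p) * b = 1 - p := by rw [sub_mul, one_mul, hpb, ← hb, add_sub_cancel_left]
  have hp' : IsSelfAdjoint p := hp.2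
  have hby : Commute p (b * y) := by
    simpa only [sub_sub_cancel] using
      (Commute.one_left _).sub_left (h.commute_mul_of_mul_eq hp.one_sub.2 hbq)
  have hyb : Commute p (y * b) := by
    simpa only [sub_sub_cancel] using
      (Commute.one_left _).sub_left (h.commute_mul_of_mul_eq' hp.one_sub.2 hqb)
  refine ⟨y * a * y, isMP_mul_mul_of_isSelfAdjoint ?_ ?_ ?_⟩
  · calc a * y * a = p * b * y * (b * p) := by rw [hpb, hbp]
      _ = p * (b * y * b) * p := by noncomm_ring
      _ = a := by rw [h.1, hpb, hap]
  · rw [← hpb, mul_assoc]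
    exact (hp'.commute_iff h.2.2.1).1 hby
  · rw [← hbp, ← mul_assoc]
    exact (IsSelfAdjoint.commute_iff h.2.2.2 hp').1 hyb.symm

lemma exists_isMP_add_one_sub_iff (hp : IsProjector p) (hpa : p * a = a) (hap : a * p = a) :
    (∃ y, IsMP (a + (1 - p)) y) ↔ ∃ x, IsMP a x :=
  ⟨fun ⟨_, h⟩ ↦ h.exists_of_add_one_sub hp hpa hap,
    fun ⟨x, h⟩ ↦ ⟨x + (1 - p), h.add_one_sub hp hpa hap⟩⟩

end Corner

end

theorem stmt4_general {R : Type*} [Ring R] [StarRing R] (p q : R)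
    (hp : IsProjector p) :
    (∃ x, IsMP (1 - p * q * p) x) ↔ (∃ x, IsMP (p - p * q * p) x) := by
  have hpa : p * (p - p * q * p) = p - p * q * p := by
    calc p * (p - p * q * p) = p * p - (p * p) * q * p := by noncomm_ring
      _ = p - p * q * p := by rw [hp.1]
  have hap : (p - p * q * p) * p = p - p * q * p := by
    calc (p - p * q * p) * p = p * p - p * q * (p * p) := by noncomm_ring
      _ = p - p * q * p := by rw [hp.1]
  rw [show (1 : R) - p * q * p = (p - p * q * p) + (1 - p) by abel]
  exact exists_isMP_add_one_sub_iff hp hpa hap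

theorem stmt4 {R : Type*} [Ring R] [StarRing R] (p q : R)
    (hp : IsProjector p) (hq : IsProjector q)
    (hc1 : StarCancellable (p * (1 - q))) (hc2 : StarCancellable (q * (1 - p))) :
    (∃ x, IsMP (1 - p * q * p) x) ↔ (∃ x, IsMP (p - p * q * p) x) :=
  stmt4_general p q hp
end

section
/- Let R be a *-ring and p, q projectors in R such that p(1-q) is *-cancellable. Then p - pqp is Moore-Penrose invertible if and only if p - pq is Moore-Penrose invertible. -/
section MoorePenrose

variable {R : Type*} [Ring R] [StarRing R] {a b b' c : R}

lemma IsMP.unique (h : IsMP a b) (h' : IsMP a b') : b = b' := by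
  obtain ⟨h1, h2, h3, h4⟩ := h
  obtain ⟨h1', h2', h3', h4'⟩ := h'
  have hab : a * b = a * b' :=
    calc a * b = star (a * b) := h3.symm
      _ = star (a * b' * (a * b)) := by rw [← mul_assoc, h1']
      _ = a * b * (a * b') := by rw [star_mul, h3, h3']
      _ = a * b' := by rw [← mul_assoc, h1]
  have hba : b * a = b' * a :=
    calc b * a = star (b * a) := h4.symm
      _ = star (b * a * (b' * a)) := by
        rw [← mul_assoc, mul_assoc b a b', mul_assoc b (a * b') a, h1']
      _ = b' * a * (b * a) := by rw [star_mul, h4, h4']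
      _ = b' * a := by rw [mul_assoc, ← mul_assoc a, h1]
  calc b = b * a * b := h2.symm
    _ = b' * (a * b') := by rw [hba, mul_assoc, hab]
    _ = b' := by rw [← mul_assoc, h2']

lemma isMP_star (h : IsMP a b) : IsMP (star a) (star b) := by
  obtain ⟨h1, h2, h3, h4⟩ := h
  refine ⟨?_, ?_, ?_, ?_⟩
  · simpa only [star_mul, mul_assoc] using congrArg star h1
  · simpa only [star_mul, mul_assoc] using congrArg star h2
  · rw [← star_mul, h4, h4]
  · rw [← star_mul, h3, h3]

lemma IsMP.star_eq_self (h : IsMP a b) (ha : star a = a) : star b = b :=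
  (ha ▸ isMP_star h).unique h

lemma IsMP.mul_star (h : IsMP a b) : IsMP (a * star a) (star b * b) := by
  obtain ⟨h1, h2, h3, h4⟩ := h
  have h_right : a * star a * star b = a := by
    rw [mul_assoc, ← star_mul, h4, ← mul_assoc, h1]
  have h_left : b * (a * star a) = star a := by
    simpa only [star_mul, star_star, mul_assoc] using congrArg star h_right
  refine ⟨?_, ?_, ?_, ?_⟩
  · calc a * star a * (star b * b) * (a * star a)
          = a * star a * star b * (b * (a * star a)) := by simp only [mul_assoc]
      _ = a * star a := by rw [h_right, h_left]
  · calc star b * b * (a * star a) * (star b * b)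
          = star b * (b * (a * star a)) * star b * b := by simp only [mul_assoc]
      _ = star b * (b * a * b) := by
        rw [h_left, mul_assoc (star b), ← star_mul, h4]; simp only [mul_assoc]
      _ = star b * b := by rw [h2]
  · rw [← mul_assoc, h_right, h3]
  · rw [mul_assoc, h_left, ← star_mul, star_star, h3]

lemma IsMP.of_mul_star (hcancel : ∀ x : R, x * (a * star a) = 0 → x * a = 0)
    (h : IsMP (a * star a) c) : IsMP a (star a * c) := by
  have hc : star c = c := h.star_eq_self (by rw [star_mul, star_star])
  obtain ⟨h1, h2, h3, -⟩ := h
  have hac : a * star a * c * a = a := by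
    have hz : (a * star a * c - 1) * (a * star a) = 0 := by
      rw [sub_mul, one_mul, h1, sub_self]
    simpa only [sub_mul, one_mul, sub_eq_zero] using hcancel _ hz
  refine ⟨?_, ?_, ?_, ?_⟩
  · rw [← mul_assoc, hac]
  · calc star a * c * a * (star a * c) = star a * (c * (a * star a) * c) := by
          simp only [mul_assoc]
      _ = star a * c := by rw [h2]
  · rw [← mul_assoc, h3]
  · rw [star_mul, star_mul, star_star, hc, mul_assoc]

theorem exists_isMP_mul_star_iff (hcancel : ∀ x : R, x * (a * star a) = 0 → x * a = 0) :
    (∃ x, IsMP (a * star a) x) ↔ ∃ x, IsMP a x :=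
  ⟨fun ⟨_, h⟩ => ⟨_, IsMP.of_mul_star hcancel h⟩, fun ⟨_, h⟩ => ⟨_, IsMP.mul_star h⟩⟩

end MoorePenrose

section Projector

variable {R : Type*} [Ring R] [StarRing R] {p q : R}

lemma IsProjector.one_sub_s5 (hq : IsProjector q) : IsProjector (1 - q) :=
  ⟨by rw [sub_mul, one_mul, mul_sub, mul_one, hq.1, sub_self, sub_zero],
    by rw [star_sub, star_one, hq.2]⟩

lemma IsProjector.mul_mul_star (hp : IsProjector p) (hq : IsProjector q) :
    p * q * star (p * q) = p * q * p := by
  rw [star_mul, hp.2, hq.2, ← mul_assoc, mul_assoc p, hq.1]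

end Projector

theorem stmt5 {R : Type*} [Ring R] [StarRing R] (p q : R)
    (hp : IsProjector p) (hq : IsProjector q)
    (hc : StarCancellable (p * (1 - q))) :
    (∃ x, IsMP (p - p * q * p) x) ↔ (∃ x, IsMP (p - p * q) x) := by
  have ha : p * (1 - q) = p - p * q := by rw [mul_sub, mul_one]
  have haa : p * (1 - q) * star (p * (1 - q)) = p - p * q * p := by
    rw [hp.mul_mul_star hq.one_sub_s5, ha, sub_mul, hp.1]
  rw [← haa, ← ha]
  exact exists_isMP_mul_star_iff hc.2
end

section
/- Let R be a *-ring, p, q projectors with p - q Moore-Penrose invertible, and F = p(p-q)†. Then F² = F and F = (p-q)†(1-q). -/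
def IsGroupInverse {M : Type*} [Monoid M] (x y : M) : Prop :=
  x * y * x = x ∧ y * x * y = y ∧ Commute x y

namespace IsGroupInverse

variable {M : Type*} [Monoid M] {x y : M}

theorem pow (h : IsGroupInverse x y) (n : ℕ) : IsGroupInverse (x ^ n) (y ^ n) := by
  obtain ⟨hxyx, hyxy, hxy⟩ := h
  refine ⟨?_, ?_, hxy.pow_pow n n⟩
  · rw [← hxy.mul_pow, ← ((Commute.refl x).mul_left hxy.symm).mul_pow, hxyx]
  · rw [← hxy.symm.mul_pow, ← ((Commute.refl y).mul_left hxy).mul_pow, hyxy]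

theorem commute_of_commute (h : IsGroupInverse x y) {z : M} (hz : Commute z x) :
    Commute z y := by
  obtain ⟨hxyx, hyxy, hxy⟩ := h
  have hy : y * y * x = y := by rw [mul_assoc, ← hxy.eq, ← mul_assoc, hyxy]
  have hx : y * x * x = x := by rw [← hxy.eq, hxyx]
  have hxyy : x * y * y = y := by rw [hxy.eq, hyxy]
  -- both `z y` and `y z` equal `y x z y`
  have hzy : z * y = y * x * z * y := by
    calc z * y = z * (x * y * y) := by rw [hxyy]
      _ = y * x * x * z * y * y := by rw [hx]; simp only [mul_assoc, hz.left_comm]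
      _ = y * x * z * (x * y * y) := by simp only [mul_assoc, hz.left_comm]
      _ = y * x * z * y := by rw [hxyy]
  have hyz : y * z = y * x * z * y := by
    calc y * z = y * y * (x * z) := by rw [← mul_assoc, hy]
      _ = y * y * z * (x * y * x) := by rw [← hz.eq, hxyx, mul_assoc (y * y)]
      _ = y * y * x * z * (y * x) := by simp only [mul_assoc, hz.left_comm]
      _ = y * z * (x * y) := by rw [hy, ← hxy.eq]
      _ = y * x * z * y := by simp only [mul_assoc, hz.left_comm]
  exact hzy.trans hyz.symm

end IsGroupInverse

namespace IsMP

variable {R : Type*} [Ring R] [StarRing R] {a b c : R}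

protected theorem star (h : IsMP a b) : IsMP (star a) (star b) := by
  obtain ⟨h1, h2, h3, h4⟩ := h
  refine ⟨?_, ?_, ?_, ?_⟩
  · rw [← star_mul, ← star_mul, ← mul_assoc, h1]
  · rw [← star_mul, ← star_mul, ← mul_assoc, h2]
  · rw [← star_mul, star_star, h4]
  · rw [← star_mul, star_star, h3]

theorem mul_right_eq (hb : IsMP a b) (hc : IsMP a c) : a * b = a * c :=
  calc a * b = star (a * c) * star (a * b) := by
        rw [hb.2.2.1, hc.2.2.1, ← mul_assoc, mul_assoc a c a, ← mul_assoc, hc.1]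
    _ = a * c := by rw [← star_mul, ← mul_assoc, hb.1, hc.2.2.1]

theorem mul_left_eq (hb : IsMP a b) (hc : IsMP a c) : b * a = c * a :=
  calc b * a = star (b * a) * star (c * a) := by
        rw [hb.2.2.2, hc.2.2.2, mul_assoc b a, ← mul_assoc a c a, hc.1]
    _ = c * a := by rw [← star_mul, mul_assoc c, ← mul_assoc a b a, hb.1, hc.2.2.2]

theorem unique_s8 (hb : IsMP a b) (hc : IsMP a c) : b = c :=
  calc b = b * a * c := by rw [mul_assoc, ← hb.mul_right_eq hc, ← mul_assoc, hb.2.1]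
    _ = c := by rw [hb.mul_left_eq hc, hc.2.1]

theorem isSelfAdjoint (ha : IsSelfAdjoint a) (h : IsMP a b) : IsSelfAdjoint b := by
  have hstar := h.star
  rw [ha.star_eq] at hstar
  exact (h.unique_s8 hstar).symm

theorem commute (ha : IsSelfAdjoint a) (h : IsMP a b) : Commute a b := by
  have hb := h.isSelfAdjoint ha
  calc a * b = star (a * b) := h.2.2.1.symm
    _ = b * a := by rw [star_mul, ha.star_eq, hb.star_eq]

end IsMP

namespace IsIdempotentElem

variable {R : Type*} [Ring R] {p q : R}

theorem commute_sub_sq (hp : IsIdempotentElem p) (hq : IsIdempotentElem q) :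
    Commute p ((p - q) ^ 2) := by
  have hsq : (p - q) ^ 2 = p + q - p * q - q * p := by
    rw [sq]; simp only [mul_sub, sub_mul, hp.eq, hq.eq]; abel
  -- both products equal `p - p q p`
  have hqpp : q * p * p = q * p := by rw [mul_assoc, hp.eq]
  rw [Commute, SemiconjBy, hsq]
  simp only [mul_sub, sub_mul, mul_add, add_mul, ← mul_assoc, hp.eq, hqpp]
  abel

theorem mul_sub_eq_mul_one_sub (hp : IsIdempotentElem p) (q : R) :
    p * (p - q) = p * (1 - q) := by
  rw [mul_sub, mul_sub, hp.eq, mul_one]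

theorem sub_mul_one_sub (hq : IsIdempotentElem q) (p : R) :
    (p - q) * (1 - q) = p * (1 - q) := by
  rw [sub_mul, mul_sub, mul_sub, hq.eq, mul_one, mul_one, sub_self, sub_zero]

end IsIdempotentElem

theorem stmt8 {R : Type*} [Ring R] [StarRing R] (p q d : R)
    (hp : IsProjector p) (hq : IsProjector q)
    (hd : IsMP (p - q) d) :
    (p * d) * (p * d) = p * d ∧ p * d = d * (1 - q) := by
  have hcomm : Commute (p - q) d := hd.commute (IsSelfAdjoint.sub hp.2 hq.2)
  have hgroup : IsGroupInverse (p - q) d := ⟨hd.1, hd.2.1, hcomm⟩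
  have hpd2 : Commute p (d ^ 2) :=
    (hgroup.pow 2).commute_of_commute (IsIdempotentElem.commute_sub_sq hp.1 hq.1)
  have hd_eq : d = d ^ 2 * (p - q) := by rw [sq, mul_assoc, ← hcomm.eq, ← mul_assoc, hd.2.1]
  have hpd : p * d = d ^ 2 * (p * (1 - q)) := by
    rw [← IsIdempotentElem.mul_sub_eq_mul_one_sub hp.1, ← mul_assoc, ← hpd2.eq, mul_assoc,
      ← hd_eq]
  have hF : p * d = d * (1 - q) := by
    rw [hpd, ← IsIdempotentElem.sub_mul_one_sub hq.1, ← mul_assoc, ← hd_eq]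
  refine ⟨?_, hF⟩
  calc p * d * (p * d) = p * d * (d * (1 - q)) := by rw [← hF]
    _ = p * d ^ 2 * (1 - q) := by rw [sq]; simp only [mul_assoc]
    _ = p * d := by rw [hpd2.eq, mul_assoc, ← hpd]
end

section
/- Let R be a *-ring and p, q projectors with p - q Moore-Penrose invertible. Then (p-q)†p(1-q) = (1-q)p(p-q)†. -/
theorem IsMP.commute_of_isSelfAdjoint {R : Type*} [Ring R] [StarRing R] {a d : R}
    (hd : IsMP a d) (ha : IsSelfAdjoint a) : Commute a d := by
  obtain ⟨had, -, hstar_ad, hstar_da⟩ := hd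
  have hl : a * d = star d * a := by rw [← hstar_ad, star_mul, ha.star_eq]
  have hr : d * a = a * star d := by rw [← hstar_da, star_mul, ha.star_eq]
  -- both `ad` and `da` equal `(ad)(da)`
  calc a * d = star d * a * (d * a) := by rw [hl, mul_assoc, ← mul_assoc a d a, had]
    _ = a * d * a * star d := by rw [← hl, hr, mul_assoc (a * d) a]
    _ = d * a := by rw [had, hr]

theorem Commute.of_twoSidedUnit {R : Type*} [Monoid R] {b x e u v : R} (hbx : Commute b x)
    (hex : e * x = x) (hxe : x * e = x) (hu : e = x * u) (hv : e = v * x) : Commute b e := by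
  have hright : e * b * e = b * e :=
    calc e * b * e = e * (b * x) * u := by rw [hu]; simp only [mul_assoc]
      _ = b * e := by rw [hbx.eq, ← mul_assoc, hex, ← hbx.eq, hu, mul_assoc]
  have hleft : e * b * e = e * b :=
    calc e * b * e = v * (x * b) * e := by rw [hv]; simp only [mul_assoc]
      _ = e * b := by rw [← hbx.eq, mul_assoc, mul_assoc, hxe, hbx.eq, ← mul_assoc, hv]
  exact hright.symm.trans hleft

theorem IsIdempotentElem.commute_sub_mul_self {R : Type*} [Ring R] {p q : R}
    (hp : IsIdempotentElem p) (hq : IsIdempotentElem q) : Commute q ((p - q) * (p - q)) := by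
  have hleft : q * ((p - q) * (p - q)) = q - q * p * q :=
    calc q * ((p - q) * (p - q)) = q * (p * p) - q * p * q - q * q * p + q * q * q := by
          noncomm_ring
      _ = q - q * p * q := by rw [hp.eq, hq.eq, hq.eq]; abel
  have hright : (p - q) * (p - q) * q = q - q * p * q :=
    calc (p - q) * (p - q) * q = p * p * q - p * q * q - q * p * q + q * q * q := by
          noncomm_ring
      _ = q - q * p * q := by rw [hp.eq, mul_assoc p q q, hq.eq, hq.eq]; abel
  exact hleft.trans hright.symm

theorem Commute.mul_of_commute_mul_self {R : Type*} [Ring R] {a d b : R} (had : Commute a d)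
    (hada : a * d * a = a) (hb : Commute b (a * a)) : Commute b (a * d) := by
  have hsq : a * d * (a * a) = a * a := by rw [← mul_assoc, hada]
  have ha_ad : Commute a (a * d) := (Commute.refl a).mul_right had
  have hsq_ad : a * d = a * a * (d * d) :=
    calc a * d = a * (d * a) * d := by rw [← mul_assoc, hada]
      _ = a * a * (d * d) := by rw [← had.eq, ← mul_assoc, mul_assoc]
  refine hb.of_twoSidedUnit (u := d * d) (v := d * d) hsq ?_ hsq_ad ?_
  · rw [(ha_ad.mul_left ha_ad).eq, hsq]
  · rw [hsq_ad, ((had.mul_left had).mul_right (had.mul_left had)).eq]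

theorem stmt12 {R : Type*} [Ring R] [StarRing R] (p q d : R)
    (hp : IsProjector p) (hq : IsProjector q)
    (hd : IsMP (p - q) d) :
    (d * p) * (1 - q) = (1 - q) * (p * d) := by
  obtain ⟨hp_idem : IsIdempotentElem p, hp_star⟩ := hp
  obtain ⟨hq_idem : IsIdempotentElem q, hq_star⟩ := hq
  have ha : IsSelfAdjoint (p - q) := by rw [IsSelfAdjoint, star_sub, hp_star, hq_star]
  have had : Commute (p - q) d := hd.commute_of_isSelfAdjoint ha
  have hq_ad : Commute (1 - q) ((p - q) * d) :=
    (Commute.one_left _).sub_left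
      (had.mul_of_commute_mul_self hd.1 (hp_idem.commute_sub_mul_self hq_idem))
  have hright : p * (1 - q) = (p - q) * (1 - q) := by
    rw [sub_mul p q, hq_idem.mul_one_sub_self, sub_zero]
  have hleft : (1 - q) * p = (1 - q) * (p - q) := by
    rw [mul_sub (1 - q) p, hq_idem.one_sub_mul_self, sub_zero]
  calc d * p * (1 - q) = (p - q) * d * (1 - q) := by rw [mul_assoc, hright, ← mul_assoc, had.eq]
    _ = (1 - q) * (p * d) := by rw [← hq_ad.eq, ← mul_assoc, ← hleft, mul_assoc]
end

section
/- Let R be a *-ring in which 2 is invertible, p, q projectors with p - q Moore-Penrose invertible, and H = (p-q)(p-q)†. If pH = p, then p + q is Moore-Penrose invertible and (p+q)† = (p-q)†(p+q)(p-q)†. -/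
section Idempotent

variable {R : Type*} [Ring R] {p q : R}

theorem IsIdempotentElem.sub_mul_add (hp : IsIdempotentElem p) (hq : IsIdempotentElem q) :
    (p - q) * (p + q) = (2 - (p + q)) * (p - q) := by
  rw [← sub_eq_zero, show (p - q) * (p + q) - (2 - (p + q)) * (p - q) =
      2 * (p * p - p) - 2 * (q * q - q) by noncomm_ring, hp.eq, hq.eq]
  simp

theorem IsIdempotentElem.sub_mul_sub (hp : IsIdempotentElem p) (hq : IsIdempotentElem q) :
    (p - q) * (p - q) = (2 - (p + q)) * (p + q) := by
  rw [← sub_eq_zero, show (p - q) * (p - q) - (2 - (p + q)) * (p + q) =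
      2 * (p * p - p) + 2 * (q * q - q) by noncomm_ring, hp.eq, hq.eq]
  simp

end Idempotent

section MoorePenrose

variable {R : Type*} [Ring R] [StarRing R] {a d s : R}

/-- Both `a d` and `d a` equal `(a d) (d a)`. -/
theorem IsMP.mul_comm_of_isSelfAdjoint (h : IsMP a d) (ha : IsSelfAdjoint a) :
    a * d = d * a := by
  obtain ⟨h1, -, h3, h4⟩ := h
  have had : a * d = star d * a := by rw [← h3, star_mul, ha.star_eq]
  have hda : d * a = a * star d := by rw [← h4, star_mul, ha.star_eq]
  calc a * d = star d * (a * d * a) := by rw [h1, had]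
    _ = (star d * a) * (d * a) := by noncomm_ring
    _ = (a * d) * (a * star d) := by rw [← had, hda]
    _ = (a * d * a) * star d := by noncomm_ring
    _ = d * a := by rw [h1, hda]

theorem IsMP.of_mul_mul_eq (h : IsMP a d) (hs : s * d * s = a) (hH : a * d * s = s) :
    IsMP s (d * s * d) := by
  obtain ⟨-, h2, h3, h4⟩ := h
  have hsx : s * (d * s * d) = a * d := by rw [← hs]; noncomm_ring
  have hxs : d * s * d * s = d * a := by rw [← hs]; noncomm_ring
  refine ⟨?_, ?_, by rw [hsx, h3], by rw [hxs, h4]⟩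
  · rw [hsx, hH]
  · rw [hxs]; simp only [← mul_assoc, h2]

end MoorePenrose

section Projector

variable {R : Type*} [Ring R] [StarRing R] {p q d : R}

theorem sub_mul_mp_mul_add (hp : IsSelfAdjoint p) (hd : IsMP (p - q) d)
    (hH : p * ((p - q) * d) = p) : (p - q) * d * (p + q) = p + q := by
  have hHp : (p - q) * d * p = p := by
    simpa only [star_mul, hp.star_eq, hd.2.2.1] using congrArg star hH
  calc (p - q) * d * (p + q) = 2 * ((p - q) * d * p) - (p - q) * d * (p - q) := by noncomm_ring
    _ = p + q := by rw [hHp, hd.1]; noncomm_ring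

theorem add_mul_sub_mul_mp (hp : IsSelfAdjoint p) (hq : IsSelfAdjoint q) (hd : IsMP (p - q) d)
    (hH : p * ((p - q) * d) = p) : (p + q) * ((p - q) * d) = p + q := by
  simpa only [star_mul, star_add, hp.star_eq, hq.star_eq, hd.2.2.1]
    using congrArg star (sub_mul_mp_mul_add hp hd hH)

theorem add_mul_mp (hp : IsProjector p) (hq : IsProjector q) (hd : IsMP (p - q) d)
    (hH : p * ((p - q) * d) = p) : (p + q) * d = d * (2 - (p + q)) := by
  have hcomm := hd.mul_comm_of_isSelfAdjoint (IsSelfAdjoint.sub hp.2 hq.2)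
  calc (p + q) * d = (p - q) * d * (p + q) * d := by rw [sub_mul_mp_mul_add hp.2 hd hH]
    _ = d * ((p - q) * (p + q)) * d := by rw [hcomm]; noncomm_ring
    _ = d * (2 * ((p - q) * d) - (p + q) * ((p - q) * d)) := by
      rw [IsIdempotentElem.sub_mul_add hp.1 hq.1]; noncomm_ring
    _ = 2 * (d * (p - q) * d) - d * (p + q) := by
      rw [add_mul_sub_mul_mp hp.2 hq.2 hd hH]; noncomm_ring
    _ = d * (2 - (p + q)) := by rw [hd.2.1]; noncomm_ring

theorem add_mul_mp_mul_add (hp : IsProjector p) (hq : IsProjector q) (hd : IsMP (p - q) d)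
    (hH : p * ((p - q) * d) = p) : (p + q) * d * (p + q) = p - q := by
  have hcomm := hd.mul_comm_of_isSelfAdjoint (IsSelfAdjoint.sub hp.2 hq.2)
  calc (p + q) * d * (p + q) = d * ((2 - (p + q)) * (p + q)) := by
        rw [add_mul_mp hp hq hd hH]; noncomm_ring
    _ = (p - q) * d * (p - q) := by
      rw [← IsIdempotentElem.sub_mul_sub hp.1 hq.1, ← mul_assoc, hcomm]
    _ = p - q := hd.1

end Projector

theorem stmt14_general {R : Type*} [Ring R] [StarRing R] (p q d : R)
    (hp : IsProjector p) (hq : IsProjector q)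
    (hd : IsMP (p - q) d)
    (hH : p * ((p - q) * d) = p) :
    IsMP (p + q) (d * (p + q) * d) :=
  hd.of_mul_mul_eq (add_mul_mp_mul_add hp hq hd hH) (sub_mul_mp_mul_add hp.2 hd hH)

theorem stmt14 {R : Type*} [Ring R] [StarRing R] (p q d : R)
    (h2 : IsUnit (2 : R))
    (hp : IsProjector p) (hq : IsProjector q)
    (hd : IsMP (p - q) d)
    (hH : p * ((p - q) * d) = p) :
    IsMP (p + q) (d * (p + q) * d) :=
  stmt14_general p q d hp hq hd hH
end

section
/- Let R be a *-ring in which 2 is invertible, p, q projectors with p - q Moore-Penrose invertible, and H = (p-q)(p-q)†. Then pH = p if and only if (p+q)H = p + q. -/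
theorem IsMP.star_mul_mul_eq {R : Type*} [Ring R] [StarRing R] {a b : R} (h : IsMP a b) :
    star a * (a * b) = star a := by
  calc star a * (a * b) = star a * star (a * b) := by rw [h.2.2.1]
    _ = star (a * b * a) := by rw [← star_mul, mul_assoc]
    _ = star a := by rw [h.1]

theorem mul_eq_iff_add_mul_eq_of_sub_mul_eq {R : Type*} [Ring R] {p q h : R}
    (h2 : IsUnit (2 : R)) (hpq : (p - q) * h = p - q) :
    p * h = p ↔ (p + q) * h = p + q := by
  have hsum : (p + q) * h = 2 * (p * h) - (p - q) * h := by noncomm_ring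
  rw [hsum, hpq, sub_eq_iff_eq_add, show p + q + (p - q) = 2 * p by noncomm_ring,
    h2.mul_right_inj]

theorem stmt15 {R : Type*} [Ring R] [StarRing R] (p q d : R)
    (h2 : IsUnit (2 : R))
    (hp : IsProjector p) (hq : IsProjector q)
    (hd : IsMP (p - q) d) :
    p * ((p - q) * d) = p ↔ (p + q) * ((p - q) * d) = p + q := by
  have hself : star (p - q) = p - q := by rw [star_sub, hp.2, hq.2]
  have hH : (p - q) * ((p - q) * d) = p - q := by simpa only [hself] using hd.star_mul_mul_eq
  exact mul_eq_iff_add_mul_eq_of_sub_mul_eq h2 hH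
end

section
/- Let R be a *-ring and p, q projectors such that pq - qp is *-cancellable. Then: (1) p - q is Moore-Penrose invertible with (p-q)† = p - q if and only if pq = qp; (2) if 6 is invertible in R, then p + q is Moore-Penrose invertible with (p+q)† = p + q if and only if pq = 0. -/
/-!
Both `p - q` and `p + q` are self-adjoint, so each is its own Moore–Penrose inverse exactly when
it is tripotent. Expanding, `(p - q)³ = p - q` says `pqp = qpq`; then the commutator
`c = pq - qp` satisfies `c* c = 0`, and *-cancellability forces `c = 0`.
Likewise `(p + q)³ = p + q` says `2pq + 2qp + pqp + qpq = 0`. Multiplying by `p` on the left and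
then by `q` on the right gives `6 (pq + 2pqp) = 0`, so `pq = -2pqp` is self-adjoint, i.e. `pq = qp`;
then `pqp = pq`, whence `6 pq = 0` and `pq = 0`.
-/

section

variable {R : Type*} [Ring R] [StarRing R]

theorem isMP_self_iff {a : R} (ha : star a = a) : IsMP a a ↔ a * a * a = a := by
  have hsq : star (a * a) = a * a := by rw [star_mul, ha]
  exact ⟨fun h => h.1, fun h => ⟨h, h, hsq, hsq⟩⟩

theorem StarCancellable.eq_zero_of_star_mul_self_eq_zero {a : R} (ha : StarCancellable a)
    (h : star a * a = 0) : a = 0 := by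
  simpa using ha.1 1 (by rw [h, zero_mul])

namespace IsProjector

variable {p q : R}

theorem mul_mul_self (hp : IsProjector p) (x : R) : x * p * p = x * p := by
  rw [mul_assoc, hp.1]

theorem star_mul (hp : IsProjector p) (hq : IsProjector q) : star (p * q) = q * p := by
  rw [StarMul.star_mul, hp.2, hq.2]

theorem star_sub (hp : IsProjector p) (hq : IsProjector q) : star (p - q) = p - q := by
  rw [_root_.star_sub, hp.2, hq.2]

theorem star_add (hp : IsProjector p) (hq : IsProjector q) : star (p + q) = p + q := by
  rw [StarAddMonoid.star_add, hp.2, hq.2]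

theorem sub_cube (hp : IsProjector p) (hq : IsProjector q) :
    (p - q) * (p - q) * (p - q) = p - q - p * q * p + q * p * q := by
  simp only [sub_mul, mul_sub, hp.1, hq.1, hp.mul_mul_self, hq.mul_mul_self]
  abel

theorem add_cube (hp : IsProjector p) (hq : IsProjector q) :
    (p + q) * (p + q) * (p + q) =
      p + q + (2 • (p * q) + 2 • (q * p) + p * q * p + q * p * q) := by
  simp only [add_mul, mul_add, hp.1, hq.1, hp.mul_mul_self, hq.mul_mul_self]
  abel

theorem sub_cube_eq_self_iff (hp : IsProjector p) (hq : IsProjector q) :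
    (p - q) * (p - q) * (p - q) = p - q ↔ p * q * p = q * p * q := by
  rw [hp.sub_cube hq, sub_add, sub_eq_self, sub_eq_zero]

theorem add_cube_eq_self_iff (hp : IsProjector p) (hq : IsProjector q) :
    (p + q) * (p + q) * (p + q) = p + q ↔
      2 • (p * q) + 2 • (q * p) + p * q * p + q * p * q = 0 := by
  rw [hp.add_cube hq, add_eq_left]

theorem mul_eq_mul_iff_mul_mul_eq_mul_mul (hp : IsProjector p) (hq : IsProjector q)
    (hc : StarCancellable (p * q - q * p)) : p * q = q * p ↔ p * q * p = q * p * q := by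
  refine ⟨fun h => by rw [h, hp.mul_mul_self, mul_assoc, h, ← mul_assoc, hq.1], fun h => ?_⟩
  have hqpqp : q * p * q * p = p * q * p := by rw [← h, hp.mul_mul_self]
  refine sub_eq_zero.mp (hc.eq_zero_of_star_mul_self_eq_zero ?_)
  rw [_root_.star_sub, hp.star_mul hq, hq.star_mul hp]
  simp only [sub_mul, mul_sub, ← mul_assoc, hp.mul_mul_self, hq.mul_mul_self, hqpqp, h]
  abel

theorem six_nsmul_eq_zero_of_add_cube_eq_self (hp : IsProjector p) (hq : IsProjector q)
    (h : (p + q) * (p + q) * (p + q) = p + q) : 6 • (p * q + 2 • (p * q * p)) = 0 := by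
  rw [hp.add_cube_eq_self_iff hq] at h
  have hleft : 2 • (p * q) + 3 • (p * q * p) + p * q * p * q = 0 := by
    have := congrArg (p * ·) h
    simp only [mul_add, mul_smul_comm, ← mul_assoc, hp.1, mul_zero] at this
    rw [← this]
    abel
  have hright : 2 • (p * q) + 4 • (p * q * p * q) = 0 := by
    have := congrArg (· * q) hleft
    simp only [add_mul, smul_mul_assoc, hq.mul_mul_self, zero_mul] at this
    rw [← this]
    abel
  calc 6 • (p * q + 2 • (p * q * p))
      = 4 • (2 • (p * q) + 3 • (p * q * p) + p * q * p * q) -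
          (2 • (p * q) + 4 • (p * q * p * q)) := by abel
    _ = 0 := by rw [hleft, hright, smul_zero, sub_zero]

theorem mul_eq_mul_of_add_two_nsmul_eq_zero (hp : IsProjector p) (hq : IsProjector q)
    (h : p * q + 2 • (p * q * p) = 0) : p * q = q * p := by
  have hpq : p * q = -(2 • (p * q * p)) := eq_neg_of_add_eq_zero_left h
  have hpqp : star (p * q * p) = p * q * p := by
    rw [StarMul.star_mul, hp.star_mul hq, hp.2, mul_assoc]
  rw [hpq, ← hpqp, ← star_nsmul, ← star_neg, ← hpq, hp.star_mul hq]

theorem mul_eq_zero_of_add_cube_eq_self (hp : IsProjector p) (hq : IsProjector q)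
    (h6 : IsLeftRegular (6 : R)) (h : (p + q) * (p + q) * (p + q) = p + q) : p * q = 0 := by
  have hcancel : ∀ x : R, 6 • x = 0 → x = 0 := fun x hx =>
    h6 (show (6 : R) * x = 6 * 0 by rw [mul_zero, ← hx, nsmul_eq_mul, Nat.cast_ofNat])
  have hsum := hcancel _ (hp.six_nsmul_eq_zero_of_add_cube_eq_self hq h)
  have hpqp : p * q * p = p * q := by
    rw [hp.mul_eq_mul_of_add_two_nsmul_eq_zero hq hsum, hp.mul_mul_self]
  rw [hpqp] at hsum
  refine hcancel _ ?_
  rw [show 6 • (p * q) = 2 • (p * q + 2 • (p * q)) by abel, hsum, smul_zero]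

theorem add_cube_eq_self_of_mul_eq_zero (hp : IsProjector p) (hq : IsProjector q)
    (h : p * q = 0) : (p + q) * (p + q) * (p + q) = p + q := by
  have hqp : q * p = 0 := by rw [← hp.star_mul hq, h, star_zero]
  rw [hp.add_cube_eq_self_iff hq, h, hqp]
  simp

end IsProjector

end

theorem stmt19 {R : Type*} [Ring R] [StarRing R] (p q : R)
    (hp : IsProjector p) (hq : IsProjector q)
    (hc : StarCancellable (p * q - q * p)) :
    (IsMP (p - q) (p - q) ↔ p * q = q * p) ∧
    (IsUnit (6 : R) → (IsMP (p + q) (p + q) ↔ p * q = 0)) := by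
  refine ⟨?_, fun h6 => ?_⟩
  · rw [isMP_self_iff (hp.star_sub hq), hp.sub_cube_eq_self_iff hq,
      hp.mul_eq_mul_iff_mul_mul_eq_mul_mul hq hc]
  · rw [isMP_self_iff (hp.star_add hq)]
    exact ⟨hp.mul_eq_zero_of_add_cube_eq_self hq h6.isRegular.left,
      hp.add_cube_eq_self_of_mul_eq_zero hq⟩
end
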